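/- arXiv:2001.07672 — 4 statements merged into one kernel-verified Lean document; each statement's English description precedes it below -/
import Mathlib

section
/- Let G be a finite connected simple undirected graph, let s be a vertex of G, and let P be a path in G from s to some vertex t such that P is a shortest path (i.e., the length of P equals the graph distance from s to t). Then the sum over all vertices x on P of the degree of x in G is at most 3·|V(G)|. -/
/-!
Along a shortest walk from `s` the distance to `s` increases by exactly one at each step, so
it is injective on the vertices of the walk. Two neighbours of a common vertex `y` are at
distance at most two from each other, so their distances to `s` differ by at most two. Hence
every vertex `y` of `G` is adjacent to at most three vertices of the walk, and counting the
pairs (vertex of the walk, neighbour) by the neighbour gives the bound `3 * |V|`.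
-/

open Finset

namespace Finset

theorem card_le_of_injOn_of_le_add {α : Type*} {s : Finset α} {f : α → ℕ} {k : ℕ}
    (hf : Set.InjOn f s) (hk : ∀ a ∈ s, ∀ b ∈ s, f a ≤ f b + k) : #s ≤ k + 1 := by
  rcases s.eq_empty_or_nonempty with rfl | hs
  · simp
  obtain ⟨b, hb, hmin⟩ := s.exists_min_image f hs
  calc #s ≤ #(Icc (f b) (f b + k)) :=
        card_le_card_of_injOn f (fun a ha ↦ mem_Icc.2 ⟨hmin a ha, hk a ha b hb⟩) hf
    _ = k + 1 := by rw [Nat.card_Icc]; omega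

end Finset

namespace SimpleGraph

variable {V : Type*} {G : SimpleGraph V}

theorem dist_le_dist_add_two_of_adj_of_adj (s : V) {x x' y : V}
    (hx : G.Adj x y) (hx' : G.Adj x' y) : G.dist s x ≤ G.dist s x' + 2 := by
  let q : G.Walk x' x := .cons hx' (.cons hx.symm .nil)
  calc G.dist s x ≤ G.dist s x' + G.dist x' x := q.reachable.dist_triangle_right s
    _ ≤ G.dist s x' + 2 := Nat.add_le_add_left (dist_le q) _

namespace Walk

variable [DecidableEq V] {s t : V} {p : G.Walk s t}

theorem dist_eq_length_takeUntil (hp : p.length = G.dist s t) {x : V} (hx : x ∈ p.support) :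
    G.dist s x = (p.takeUntil x hx).length := by
  have hsplit : (p.takeUntil x hx).length + (p.dropUntil x hx).length = p.length := by
    rw [← length_append, p.take_spec hx]
  have hxt : G.dist x t ≤ (p.dropUntil x hx).length := dist_le _
  have hsx : G.dist s x ≤ (p.takeUntil x hx).length := dist_le _
  have := (p.takeUntil x hx).reachable.dist_triangle_left t
  omega

theorem injOn_dist_support (hp : p.length = G.dist s t) :
    Set.InjOn (G.dist s) {x | x ∈ p.support} := by
  intro x hx y hy hxy
  rw [← p.getVert_length_takeUntil hx, ← p.getVert_length_takeUntil hy,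
    ← dist_eq_length_takeUntil hp, ← dist_eq_length_takeUntil hp, hxy]

theorem card_support_filter_adj_le_three (hp : p.length = G.dist s t) (y : V)
    [DecidablePred (G.Adj · y)] : #{x ∈ p.support.toFinset | G.Adj x y} ≤ 3 :=
  card_le_of_injOn_of_le_add (f := G.dist s) (k := 2)
    ((injOn_dist_support hp).mono fun x hx ↦ by simpa using (mem_filter.1 hx).1)
    fun _ ha _ hb ↦ dist_le_dist_add_two_of_adj_of_adj s (mem_filter.1 ha).2 (mem_filter.1 hb).2

end Walk

end SimpleGraph

open SimpleGraph

theorem sum_degree_along_shortest_path_le_general {V : Type*} [Fintype V] [DecidableEq V]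
    (G : SimpleGraph V) (s t : V)
    (p : G.Walk s t) (hshort : p.length = G.dist s t) :
    ∑ x ∈ p.support.toFinset, (G.neighborSet x).ncard ≤ 3 * Fintype.card V := by
  classical
  have hdeg (x : V) : (G.neighborSet x).ncard = #(univ.bipartiteAbove G.Adj x) := by
    rw [Set.ncard_eq_toFinset_card', ← neighborFinset_def, neighborFinset_eq_filter]; rfl
  calc ∑ x ∈ p.support.toFinset, (G.neighborSet x).ncard
      = ∑ y, #(p.support.toFinset.bipartiteBelow G.Adj y) := by
        simp only [hdeg]; exact sum_card_bipartiteAbove_eq_sum_card_bipartiteBelow _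
    _ ≤ ∑ _y : V, 3 := sum_le_sum fun y _ ↦ p.card_support_filter_adj_le_three hshort y
    _ = 3 * Fintype.card V := by simp [mul_comm]

/-- Let `G` be a finite connected simple undirected graph, `s` a vertex,
and `P` a shortest path from `s` to some vertex `t` (its length equals the graph distance
from `s` to `t`). Then the sum over all vertices `x` on `P` of the degree of `x` in `G`
is at most `3 * |V(G)|`. -/
theorem sum_degree_along_shortest_path_le {V : Type*} [Fintype V] [DecidableEq V]
    (G : SimpleGraph V) (hG : G.Connected) (s t : V)
    (p : G.Walk s t) (hp : p.IsPath) (hshort : p.length = G.dist s t) :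
    ∑ x ∈ p.support.toFinset, (G.neighborSet x).ncard ≤ 3 * Fintype.card V :=
  sum_degree_along_shortest_path_le_general G s t p hshort
end

section
/- Let G be a finite connected simple undirected graph with minimum degree at least k+1 for an integer k ≥ 186, let T be a spanning tree of G, and let H be a spanning subgraph of G containing T in which every vertex has degree at least min(deg_G(v), k). Then leaf(H) ≥ (1 − 30·(1 + ln(k+1))/(k+1)) · leaf(G), where leaf(·) denotes the maximum number of leaves over all spanning trees. -/
/-!
Every vertex of `H` has degree at least `k`. Greedily picking the vertex whose closed
neighbourhood meets the most undominated vertices shrinks the undominated set by a factor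
`1 - (k+1)/n` per step, so after `⌈n ln(k+1)/(k+1)⌉` steps at most `n/(k+1)` vertices remain
undominated; together with the chosen vertices they form a dominating set `D` of `H` with
`|D| ≤ n (1 + ln(k+1))/(k+1) + 1`. Joining every vertex outside `D` to a neighbour in `D` gives a
star forest with `n - |D|` edges, which extends to a spanning tree of the connected graph `H`.
The `|D| - 1` added edges have at most `2|D| - 2` endpoints, and every other vertex outside `D`
is a leaf, so `leaf(H) ≥ n - 3|D| + 2`, while trivially `leaf(G) ≤ n`. As
`n (1 + ln(k+1))/(k+1) ≥ 1`, the loss `3|D| - 2` is at most `30 n (1 + ln(k+1))/(k+1)`.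
-/

/-- `maxLeaf G` is the maximum number of leaves (degree-one vertices) over all
spanning trees of `G`. -/
noncomputable def maxLeaf {V : Type*} (G : SimpleGraph V) : ℕ :=
  sSup {c | ∃ T : SimpleGraph V, T ≤ G ∧ T.IsTree ∧
    {v | (T.neighborSet v).ncard = 1}.ncard = c}

lemma exists_nat_add_mul_one_sub_div_pow_le {n K : ℝ} (hK : 1 ≤ K) (hKn : K ≤ n) :
    ∃ t : ℕ, t + n * (1 - K / n) ^ t ≤ n * ((1 + Real.log K) / K) + 1 := by
  have hK0 : 0 < K := by linarith
  have hn0 : 0 < n := by linarith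
  set t := ⌈n * Real.log K / K⌉₊
  refine ⟨t, ?_⟩
  have ht : n * Real.log K / K ≤ t := Nat.le_ceil _
  have ht' : (t : ℝ) < n * Real.log K / K + 1 :=
    Nat.ceil_lt_add_one (by have := Real.log_nonneg hK; positivity)
  have hpow : (1 - K / n) ^ t ≤ 1 / K := by
    calc (1 - K / n) ^ t ≤ Real.exp (-(K / n)) ^ t := by
          gcongr
          · rw [sub_nonneg, div_le_one hn0]; exact hKn
          · linarith [Real.add_one_le_exp (-(K / n))]
      _ = Real.exp (-(t * K / n)) := by rw [← Real.exp_nat_mul]; ring_nf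
      _ ≤ Real.exp (-Real.log K) := by
          rw [div_le_iff₀ hK0] at ht
          gcongr
          rw [le_div_iff₀ hn0]
          linarith
      _ = 1 / K := by rw [Real.exp_neg, Real.exp_log hK0, one_div]
  calc t + n * (1 - K / n) ^ t ≤ (n * Real.log K / K + 1) + n * (1 / K) := by gcongr
    _ = n * ((1 + Real.log K) / K) + 1 := by ring

lemma one_sub_thirty_mul_le {n K m ℓ d : ℝ} (hK : 1 ≤ K) (hKn : K ≤ n) (hm : 0 ≤ m)
    (hmn : m ≤ n) (hℓ : 0 ≤ ℓ) (hd : d ≤ n * ((1 + Real.log K) / K) + 1)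
    (hnℓ : n + 2 ≤ ℓ + 3 * d) :
    (1 - 30 * ((1 + Real.log K) / K)) * m ≤ ℓ := by
  set x := (1 + Real.log K) / K
  have hx : 1 ≤ n * x := by
    have := Real.log_nonneg hK
    rw [← mul_div_assoc, one_le_div (by linarith)]
    nlinarith
  rcases le_or_gt (1 - 30 * x) 0 with hc | hc
  · exact (mul_nonpos_of_nonpos_of_nonneg hc hm).trans hℓ
  · calc (1 - 30 * x) * m ≤ (1 - 30 * x) * n := by gcongr
      _ = n - 30 * (n * x) := by ring
      _ ≤ ℓ := by linarith

namespace SimpleGraph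

variable {V : Type*}

def IsDominating (G : SimpleGraph V) (D : Set V) : Prop :=
  ∀ v ∉ D, ∃ w ∈ D, G.Adj v w

abbrev leafSet (G : SimpleGraph V) : Set V :=
  {v | (G.neighborSet v).ncard = 1}

lemma ncard_neighborSet_eq_degree (G : SimpleGraph V) (v : V) [Fintype (G.neighborSet v)] :
    (G.neighborSet v).ncard = G.degree v := by
  rw [Set.ncard_eq_toFinset_card']
  rfl

lemma IsDominating.ncard_pos [Finite V] [Nonempty V] {G : SimpleGraph V} {D : Set V}
    (hD : G.IsDominating D) : 0 < D.ncard := by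
  obtain ⟨v⟩ := ‹Nonempty V›
  rw [Set.ncard_pos]
  by_cases hv : v ∈ D
  · exact ⟨v, hv⟩
  · obtain ⟨w, hw, -⟩ := hD v hv
    exact ⟨w, hw⟩

lemma isBridge_of_neighborSet_eq_singleton {G : SimpleGraph V} {a b : V}
    (h : G.neighborSet a = {b}) : G.IsBridge s(a, b) := by
  have hN (w : V) : G.Adj a w ↔ w = b := by
    rw [← mem_neighborSet, h, Set.mem_singleton_iff]
  rw [isBridge_iff_forall_walk_mem_edges]
  intro p
  obtain ⟨w, haw, q, rfl⟩ := p.exists_eq_cons_of_ne ((hN b).2 rfl).ne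
  obtain rfl := (hN w).1 haw
  simp

lemma card_le_ncard_neighborSet_eq_add_two_mul [Finite V] {G' G : SimpleGraph V} (h : G' ≤ G) :
    Nat.card V ≤ {v | G'.neighborSet v = G.neighborSet v}.ncard +
      2 * (G.edgeSet \ G'.edgeSet).ncard := by
  set E := (G.edgeSet \ G'.edgeSet).toFinite.toFinset
  have hsub : {v | G'.neighborSet v = G.neighborSet v}ᶜ ⊆ ⋃ e ∈ E, {v | v ∈ e} := by
    intro v hv
    obtain ⟨w, hw⟩ : ∃ w, G.Adj v w ∧ ¬ G'.Adj v w := by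
      by_contra! hcon
      exact hv (Set.ext fun w => ⟨fun hw => h hw, hcon w⟩)
    simp only [Set.mem_iUnion]
    exact ⟨s(v, w), by simpa [E] using hw, Sym2.mem_mk_left v w⟩
  have hpair (e : Sym2 V) : {v | v ∈ e}.ncard ≤ 2 := by
    induction e with
    | h x y =>
      have : {v | v ∈ s(x, y)} = {x, y} := by ext; simp
      rw [this]
      exact (Set.ncard_insert_le x {y}).trans (by simp)
  calc Nat.card V
      = {v | G'.neighborSet v = G.neighborSet v}.ncard
        + {v | G'.neighborSet v = G.neighborSet v}ᶜ.ncard := (Set.ncard_add_ncard_compl _).symm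
    _ ≤ _ + ∑ e ∈ E, {v | v ∈ e}.ncard := by
        gcongr; exact (Set.ncard_le_ncard hsub).trans (E.set_ncard_biUnion_le _)
    _ ≤ _ + ∑ _e ∈ E, 2 := by gcongr with e; exact hpair e
    _ = _ := by
        rw [Finset.sum_const, smul_eq_mul, mul_comm,
          Set.ncard_eq_toFinset_card (G.edgeSet \ G'.edgeSet)]

def starForest (D : Set V) (f : V → V) : SimpleGraph V :=
  fromRel fun a b => a ∉ D ∧ b = f a

section starForest

variable {D : Set V} {f : V → V}

lemma starForest_adj (hf : ∀ v ∉ D, f v ∈ D) {a b : V} :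
    (starForest D f).Adj a b ↔ (a ∉ D ∧ b = f a) ∨ (b ∉ D ∧ a = f b) := by
  rw [starForest, fromRel_adj, and_iff_right_iff_imp]
  rintro (⟨ha, rfl⟩ | ⟨hb, rfl⟩) hab
  · exact ha (hab ▸ hf a ha)
  · exact hb (hab ▸ hf b hb)

lemma neighborSet_starForest (hf : ∀ v ∉ D, f v ∈ D) {a : V} (ha : a ∉ D) :
    (starForest D f).neighborSet a = {f a} := by
  ext b
  rw [mem_neighborSet, starForest_adj hf, Set.mem_singleton_iff]
  refine ⟨?_, fun hb => Or.inl ⟨ha, hb⟩⟩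
  rintro (⟨-, rfl⟩ | ⟨hb, rfl⟩)
  · rfl
  · exact absurd (hf b hb) ha

lemma isAcyclic_starForest (hf : ∀ v ∉ D, f v ∈ D) : (starForest D f).IsAcyclic := by
  refine isAcyclic_iff_forall_adj_isBridge.mpr fun a b hab => ?_
  rcases (starForest_adj hf).1 hab with ⟨ha, rfl⟩ | ⟨hb, rfl⟩
  · exact isBridge_of_neighborSet_eq_singleton (neighborSet_starForest hf ha)
  · rw [Sym2.eq_swap]
    exact isBridge_of_neighborSet_eq_singleton (neighborSet_starForest hf hb)

lemma edgeSet_starForest (hf : ∀ v ∉ D, f v ∈ D) :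
    (starForest D f).edgeSet = (fun v => s(v, f v)) '' Dᶜ := by
  ext e
  induction e with
  | h a b =>
    rw [mem_edgeSet, starForest_adj hf]
    constructor
    · rintro (⟨ha, rfl⟩ | ⟨hb, rfl⟩)
      · exact ⟨a, ha, rfl⟩
      · exact ⟨b, hb, Sym2.eq_swap⟩
    · rintro ⟨v, hv, he⟩
      rcases Sym2.eq_iff.1 he with ⟨rfl, rfl⟩ | ⟨rfl, rfl⟩
      · exact Or.inl ⟨hv, rfl⟩
      · exact Or.inr ⟨hv, rfl⟩

lemma ncard_edgeSet_starForest (hf : ∀ v ∉ D, f v ∈ D) :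
    (starForest D f).edgeSet.ncard = Dᶜ.ncard := by
  rw [edgeSet_starForest hf]
  refine Set.InjOn.ncard_image fun a ha b hb hab => ?_
  rcases Sym2.eq_iff.1 hab with ⟨rfl, -⟩ | ⟨rfl, -⟩
  · rfl
  · exact absurd (hf b hb) ha

lemma starForest_le {G : SimpleGraph V} (hf : ∀ v ∉ D, G.Adj v (f v)) : starForest D f ≤ G := by
  intro a b hab
  rcases hab.2 with ⟨ha, rfl⟩ | ⟨hb, rfl⟩
  · exact hf a ha
  · exact (hf b hb).symm

end starForest

theorem Connected.exists_isTree_card_add_two_le_of_isDominating [Finite V] {H : SimpleGraph V}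
    (hH : H.Connected) {D : Set V} (hD : H.IsDominating D) :
    ∃ T ≤ H, T.IsTree ∧ Nat.card V + 2 ≤ T.leafSet.ncard + 3 * D.ncard := by
  have := hH.nonempty
  have hDpos := hD.ncard_pos
  choose! f hfD hfadj using hD
  obtain ⟨T, hFT, hTH, hT⟩ :=
    hH.exists_isTree_le_of_le_of_isAcyclic (starForest_le hfadj) (isAcyclic_starForest hfD)
  refine ⟨T, hTH, hT, ?_⟩
  have hTcard : T.edgeSet.ncard + 1 = Nat.card V := by
    rw [← Nat.card_coe_set_eq]; exact (isTree_iff_connected_and_card.1 hT).2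
  have hFcard : (starForest D f).edgeSet.ncard + D.ncard = Nat.card V := by
    rw [ncard_edgeSet_starForest hfD, add_comm, Set.ncard_add_ncard_compl]
  have hdiff : (T.edgeSet \ (starForest D f).edgeSet).ncard
      = T.edgeSet.ncard - (starForest D f).edgeSet.ncard :=
    Set.ncard_sdiff (edgeSet_mono hFT)
  have hagree : {v | (starForest D f).neighborSet v = T.neighborSet v} ⊆ T.leafSet ∪ D := by
    intro v hv
    by_cases hvD : v ∈ D
    · exact Or.inr hvD
    · refine Or.inl (show (T.neighborSet v).ncard = 1 from ?_)
      rw [← hv, neighborSet_starForest hfD hvD, Set.ncard_singleton]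
  have := card_le_ncard_neighborSet_eq_add_two_mul hFT
  have := (Set.ncard_le_ncard hagree).trans (Set.ncard_union_le _ _)
  omega

section Domination

open Finset

variable [Fintype V] {G : SimpleGraph V} [DecidableRel G.Adj]

lemma add_one_le_card_of_forall_le_degree [Nonempty V] {k : ℕ} (hk : ∀ v, k ≤ G.degree v) :
    k + 1 ≤ Fintype.card V :=
  let ⟨v⟩ := ‹Nonempty V›
  (hk v).trans_lt (G.degree_lt_card_verts v)

variable [DecidableEq V]

variable (G) in
def closedNeighborFinset (v : V) : Finset V := insert v (G.neighborFinset v)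

lemma mem_closedNeighborFinset_comm {v w : V} :
    w ∈ G.closedNeighborFinset v ↔ v ∈ G.closedNeighborFinset w := by
  simp only [closedNeighborFinset, mem_insert, mem_neighborFinset, eq_comm, adj_comm]

lemma card_closedNeighborFinset (v : V) : #(G.closedNeighborFinset v) = G.degree v + 1 := by
  rw [closedNeighborFinset, card_insert_of_notMem (notMem_neighborFinset_self G v),
    card_neighborFinset_eq_degree]

lemma exists_mul_card_le_card_mul_card_inter_closedNeighborFinset [Nonempty V] {k : ℕ}
    (hk : ∀ v, k ≤ G.degree v) (U : Finset V) :
    ∃ w, (k + 1) * #U ≤ Fintype.card V * #(U ∩ G.closedNeighborFinset w) := by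
  have hcount : ∑ u ∈ U, #(G.closedNeighborFinset u)
      = ∑ w, #(U ∩ G.closedNeighborFinset w) := by
    convert sum_card_bipartiteAbove_eq_sum_card_bipartiteBelow (s := U) (t := univ)
      (fun u w => w ∈ G.closedNeighborFinset u) using 3 with u - w -
    · ext; simp
    · ext; simp [mem_closedNeighborFinset_comm (v := w)]
  have hsum : ∑ _w : V, (k + 1) * #U
      ≤ ∑ w, Fintype.card V * #(U ∩ G.closedNeighborFinset w) := by
    rw [sum_const, card_univ, smul_eq_mul, ← mul_sum, ← hcount]
    gcongr
    calc (k + 1) * #U = ∑ _u ∈ U, (k + 1) := by rw [sum_const, smul_eq_mul, mul_comm]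
      _ ≤ _ := sum_le_sum fun u _ => by
          rw [card_closedNeighborFinset]; exact Nat.succ_le_succ (hk u)
  obtain ⟨w, -, hw⟩ := exists_le_of_sum_le univ_nonempty hsum
  exact ⟨w, hw⟩

lemma exists_card_le_card_compl_biUnion_closedNeighborFinset_le [Nonempty V] {k : ℕ}
    (hk : ∀ v, k ≤ G.degree v) (t : ℕ) :
    ∃ S : Finset V, #S ≤ t ∧ (#(S.biUnion G.closedNeighborFinset)ᶜ : ℝ)
      ≤ Fintype.card V * (1 - (k + 1) / Fintype.card V) ^ t := by
  have hKn : (k + 1 : ℝ) ≤ Fintype.card V := by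
    exact_mod_cast add_one_le_card_of_forall_le_degree hk
  have hn : (0 : ℝ) < Fintype.card V := by linarith
  induction t with
  | zero => exact ⟨∅, by simp, by simp⟩
  | succ t ih =>
    obtain ⟨S, hS, hU⟩ := ih
    set U := (S.biUnion G.closedNeighborFinset)ᶜ
    obtain ⟨w, hw⟩ := exists_mul_card_le_card_mul_card_inter_closedNeighborFinset hk U
    refine ⟨insert w S, (card_insert_le _ _).trans (by omega), ?_⟩
    have hsplit : #(U \ G.closedNeighborFinset w) + #(U ∩ G.closedNeighborFinset w) = #U :=
      card_sdiff_add_card_inter _ _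
    have hstep : (#(U \ G.closedNeighborFinset w) : ℝ)
        ≤ (1 - (k + 1) / Fintype.card V) * #U := by
      have hw' : (k + 1 : ℝ) * #U / Fintype.card V ≤ #(U ∩ G.closedNeighborFinset w) := by
        rw [div_le_iff₀ hn, mul_comm _ (Fintype.card V : ℝ)]
        exact_mod_cast hw
      rw [← hsplit] at hw' ⊢
      push_cast at hw' ⊢
      generalize (#(U \ G.closedNeighborFinset w) : ℝ) = a at hw' ⊢
      generalize (#(U ∩ G.closedNeighborFinset w) : ℝ) = b at hw' ⊢
      calc a = (a + b) - b := by ring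
        _ ≤ (a + b) - (k + 1) * (a + b) / Fintype.card V := by linarith
        _ = _ := by ring
    rw [biUnion_insert, compl_union, inter_comm, ← sdiff_eq_inter_compl]
    calc _ ≤ (1 - (k + 1) / (Fintype.card V : ℝ)) * #U := hstep
      _ ≤ (1 - (k + 1) / (Fintype.card V : ℝ))
            * (Fintype.card V * (1 - (k + 1) / (Fintype.card V : ℝ)) ^ t) := by
          gcongr
          rw [sub_nonneg, div_le_one hn]; exact hKn
      _ = Fintype.card V * (1 - (k + 1) / (Fintype.card V : ℝ)) ^ (t + 1) := by ring

theorem exists_isDominating_card_le [Nonempty V] {k : ℕ} (hk : ∀ v, k ≤ G.degree v) :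
    ∃ D : Finset V, G.IsDominating D ∧
      (#D : ℝ) ≤ Fintype.card V * ((1 + Real.log (k + 1)) / (k + 1)) + 1 := by
  have hKn : (k + 1 : ℝ) ≤ Fintype.card V := by
    exact_mod_cast add_one_le_card_of_forall_le_degree hk
  obtain ⟨t, ht⟩ := exists_nat_add_mul_one_sub_div_pow_le (by simp) hKn
  obtain ⟨S, hS, hU⟩ := exists_card_le_card_compl_biUnion_closedNeighborFinset_le hk t
  refine ⟨S ∪ (S.biUnion G.closedNeighborFinset)ᶜ, fun v hv => ?_, ?_⟩
  · simp only [coe_union, coe_compl, Set.mem_union, mem_coe, Set.mem_compl_iff, not_or,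
      not_not, mem_biUnion] at hv
    obtain ⟨hvS, s, hs, hvs⟩ := hv
    have hsv : s ≠ v := by rintro rfl; exact hvS hs
    simp only [closedNeighborFinset, mem_insert, mem_neighborFinset] at hvs
    exact ⟨s, mem_coe.2 (mem_union_left _ hs), (hvs.resolve_left hsv.symm).symm⟩
  · have hSR : (#S : ℝ) ≤ t := by exact_mod_cast hS
    calc (#(S ∪ (S.biUnion G.closedNeighborFinset)ᶜ) : ℝ)
        ≤ #S + #(S.biUnion G.closedNeighborFinset)ᶜ := by exact_mod_cast card_union_le _ _
      _ ≤ _ := by linarith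

end Domination

end SimpleGraph

open SimpleGraph

section maxLeaf

variable {V : Type*} [Finite V]

lemma maxLeaf_le_card (G : SimpleGraph V) : maxLeaf G ≤ Nat.card V :=
  csSup_le' fun _ ⟨_, _, _, hc⟩ => hc ▸ Set.ncard_le_card _

lemma ncard_leafSet_le_maxLeaf {G T : SimpleGraph V} (hTG : T ≤ G) (hT : T.IsTree) :
    T.leafSet.ncard ≤ maxLeaf G :=
  le_csSup ⟨Nat.card V, fun _ ⟨_, _, _, hc⟩ => hc ▸ Set.ncard_le_card _⟩ ⟨T, hTG, hT, rfl⟩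

end maxLeaf

theorem maxLeaf_sparsifier_general {V : Type*} [Fintype V]
    (G T H : SimpleGraph V) (k : ℕ)
    (hmin : ∀ v : V, k + 1 ≤ (G.neighborSet v).ncard)
    (htree : T.IsTree) (hTH : T ≤ H)
    (hdeg : ∀ v : V, min ((G.neighborSet v).ncard) k ≤ (H.neighborSet v).ncard) :
    (1 - 30 * ((1 + Real.log ((k : ℝ) + 1)) / ((k : ℝ) + 1))) * (maxLeaf G : ℝ)
      ≤ (maxLeaf H : ℝ) := by
  classical
  have hH : H.Connected := htree.connected.mono hTH
  have := hH.nonempty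
  have hdegH (v : V) : k ≤ H.degree v := by
    have := hdeg v
    rwa [min_eq_right ((Nat.le_succ k).trans (hmin v)), ncard_neighborSet_eq_degree] at this
  obtain ⟨D, hD, hDcard⟩ := H.exists_isDominating_card_le hdegH
  obtain ⟨T', hT'H, hT', hleaves⟩ := hH.exists_isTree_card_add_two_le_of_isDominating hD
  have hleavesH : (Fintype.card V : ℝ) + 2 ≤ maxLeaf H + 3 * D.card := by
    have := ncard_leafSet_le_maxLeaf hT'H hT'
    rw [Set.ncard_coe_finset, Nat.card_eq_fintype_card] at hleaves
    exact_mod_cast hleaves.trans (by omega)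
  have hGn : (maxLeaf G : ℝ) ≤ Fintype.card V := by
    exact_mod_cast Nat.card_eq_fintype_card (α := V) ▸ maxLeaf_le_card G
  have hKn : (k + 1 : ℝ) ≤ Fintype.card V := by
    exact_mod_cast add_one_le_card_of_forall_le_degree hdegH
  exact one_sub_thirty_mul_le (by simp) hKn (Nat.cast_nonneg _) hGn (Nat.cast_nonneg _) hDcard
    hleavesH

/-- Let `G` be a finite connected simple graph with minimum degree at least
`k+1` for an integer `k ≥ 186`, `T` a spanning tree of `G`, and `H` a spanning subgraph of
`G` containing `T` in which every vertex has degree at least `min(deg_G(v), k)`. Then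
`leaf(H) ≥ (1 − 30(1 + ln(k+1))/(k+1)) · leaf(G)`. -/
theorem maxLeaf_sparsifier {V : Type*} [Fintype V]
    (G T H : SimpleGraph V) (k : ℕ) (hk : 186 ≤ k)
    (hG : G.Connected) (hmin : ∀ v : V, k + 1 ≤ (G.neighborSet v).ncard)
    (hTG : T ≤ G) (htree : T.IsTree) (hTH : T ≤ H) (hHG : H ≤ G)
    (hdeg : ∀ v : V, min ((G.neighborSet v).ncard) k ≤ (H.neighborSet v).ncard) :
    (1 - 30 * ((1 + Real.log ((k : ℝ) + 1)) / ((k : ℝ) + 1))) * (maxLeaf G : ℝ)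
      ≤ (maxLeaf H : ℝ) :=
  maxLeaf_sparsifier_general G T H k hmin htree hTH hdeg
end

section
/- Let K be a subgraph of a finite simple undirected graph H such that for every pair of vertices s, t of H, if s and t are c-vertex-connected in H then they are min(k+1, c)-vertex-connected in K (K is a (k+1)-VC certificate of H). Let T be a depth-first search tree of K. If u and v are vertices whose least common ancestor w in T has depth at most k−1 (i.e., w lies within the top k layers of T), w ≠ u, and w ≠ v, then u and v are not adjacent in H. -/
/-- `u` is an ancestor of `v` in the tree `T` rooted at `r`: `u` lies on every
(equivalently, the unique) path in `T` from `r` to `v`. -/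
def IsAncestor {V : Type*} (T : SimpleGraph V) (r u v : V) : Prop :=
  ∀ p : T.Walk r v, p.IsPath → u ∈ p.support

/-- `T` is a DFS tree of `K` rooted at `r`: a spanning tree such that every edge of `K`
connects a vertex to one of its ancestors or descendants in `T`. -/
def IsDFSTree {V : Type*} (K T : SimpleGraph V) (r : V) : Prop :=
  T ≤ K ∧ T.IsTree ∧ ∀ x y : V, K.Adj x y → IsAncestor T r x y ∨ IsAncestor T r y x

/-- `s` and `t` are `c`-vertex-connected in `H`: there are `c` pairwise internally
vertex-disjoint `s`-`t` paths. -/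
def PairConnected {V : Type*} (H : SimpleGraph V) (s t : V) (c : ℕ) : Prop :=
  ∃ f : Fin c → H.Path s t, ∀ i j : Fin c, i ≠ j →
    ∀ w : V, w ∈ (f i).1.support → w ∈ (f j).1.support → w = s ∨ w = t

/-!
If `u` and `v` were adjacent in `H`, the single edge would give `k + 1` internally disjoint
`u`–`v` paths in `H`, hence `k + 1` such paths in the certificate `K`. Every edge of `K` joins
a vertex to an ancestor, so each `K`-path from `u` to `v` passes through a common ancestor of
`u` and `v`, i.e. through an ancestor of `w`. These lie on the tree path from the root to `w`,
which has at most `k` vertices and avoids `u` and `v`; so two of the paths share an inner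
vertex.
-/

open SimpleGraph Walk

namespace IsAncestor

variable {V : Type*} {T : SimpleGraph V} {r a b c : V}

theorem refl (a : V) : IsAncestor T r a a := fun p _ => p.end_mem_support

theorem trans (hab : IsAncestor T r a b) (hbc : IsAncestor T r b c) : IsAncestor T r a c := by
  classical
  intro p hp
  have hb := hbc p hp
  exact p.support_takeUntil_subset_support hb (hab (p.takeUntil b hb) (hp.takeUntil hb))

theorem of_mem_support (hT : T.IsTree) {p : T.Walk r b} (hp : p.IsPath) (ha : a ∈ p.support) :
    IsAncestor T r a b := fun _ hq => (hT.existsUnique_path r b).unique hq hp ▸ ha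

theorem antisymm (hT : T.IsTree) (hab : IsAncestor T r a b) (hba : IsAncestor T r b a) :
    a = b := by
  classical
  by_contra hne
  obtain ⟨p, hp, -⟩ := hT.existsUnique_path r b
  have ha := hab p hp
  exact endpoint_notMem_support_takeUntil hp ha (Ne.symm hne) (hba _ (hp.takeUntil ha))

theorem total (hT : T.IsTree) (hac : IsAncestor T r a c) (hbc : IsAncestor T r b c) :
    IsAncestor T r a b ∨ IsAncestor T r b a := by
  classical
  obtain ⟨p, hp, -⟩ := hT.existsUnique_path r c
  have ha := hac p hp
  have hb := hbc p hp
  rcases List.prefix_or_prefix_of_prefix (p.support_takeUntil_prefix_support ha)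
      (p.support_takeUntil_prefix_support hb) with h | h
  · exact .inl (of_mem_support hT (hp.takeUntil hb) (h.subset (end_mem_support _)))
  · exact .inr (of_mem_support hT (hp.takeUntil ha) (h.subset (end_mem_support _)))

end IsAncestor

theorem exists_mem_support_isAncestor_of_walk {V : Type*} {K T : SimpleGraph V} {r : V}
    (hT : T.IsTree) (hK : ∀ x y : V, K.Adj x y → IsAncestor T r x y ∨ IsAncestor T r y x)
    {u v : V} (p : K.Walk u v) :
    ∃ z ∈ p.support, IsAncestor T r z u ∧ IsAncestor T r z v := by
  induction p with
  | nil => exact ⟨_, start_mem_support _, .refl _, .refl _⟩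
  | @cons u x v hux q ih =>
    obtain ⟨z, hz, hzx, hzv⟩ := ih
    have hz' : z ∈ (cons hux q).support := List.mem_cons_of_mem _ hz
    rcases hK u x hux with hux | hxu
    · rcases hzx.total hT hux with hzu | huz
      · exact ⟨z, hz', hzu, hzv⟩
      · exact ⟨u, start_mem_support _, .refl _, huz.trans hzv⟩
    · exact ⟨z, hz', hzx.trans hxu, hzv⟩

theorem pairConnected_of_adj {V : Type*} {H : SimpleGraph V} {u v : V} (h : H.Adj u v)
    (c : ℕ) : PairConnected H u v c := by
  refine ⟨fun _ => ⟨h.toWalk, by simp [h.ne]⟩, fun _ _ _ x hx _ => ?_⟩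
  simpa using hx

/-- The easy direction of Menger's theorem. -/
theorem PairConnected.le_card_of_forall_exists_mem {V : Type*} {G : SimpleGraph V} {s t : V}
    {c : ℕ} (h : PairConnected G s t c) {S : Finset V} (hs : s ∉ S) (ht : t ∉ S)
    (hS : ∀ p : G.Path s t, ∃ x ∈ S, x ∈ p.1.support) : c ≤ S.card := by
  obtain ⟨f, hf⟩ := h
  choose x hxS hxf using fun i => hS (f i)
  have hinj : Function.Injective x := by
    intro i j hij
    by_contra hne
    rcases hf i j hne (x i) (hxf i) (hij ▸ hxf j) with h | h
    · exact hs (h ▸ hxS i)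
    · exact ht (h ▸ hxS i)
  simpa using Finset.card_le_card_of_injOn (s := .univ) x (fun i _ => hxS i) hinj.injOn

theorem vc_certificate_dfs_no_cross_edge_general {V : Type*}
    (H K : SimpleGraph V) (k : ℕ)
    (hcert : ∀ s t : V, ∀ c : ℕ, PairConnected H s t c → PairConnected K s t (min (k + 1) c))
    (T : SimpleGraph V) (r : V) (hT : IsDFSTree K T r)
    (u v w : V)
    (hwu : IsAncestor T r w u) (hwv : IsAncestor T r w v)
    (hlca : ∀ z : V, IsAncestor T r z u → IsAncestor T r z v → IsAncestor T r z w)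
    (hdepth : T.dist r w < k) (hne1 : w ≠ u) (hne2 : w ≠ v) :
    ¬ H.Adj u v := by
  classical
  intro hadj
  obtain ⟨-, hTree, hDFS⟩ := hT
  obtain ⟨P, hP, hPlen⟩ := hTree.connected.exists_path_of_dist r w
  have hK : PairConnected K u v (k + 1) := by
    simpa using hcert u v (k + 1) (pairConnected_of_adj hadj (k + 1))
  have hmeet (p : K.Path u v) : ∃ x ∈ P.support.toFinset, x ∈ p.1.support := by
    obtain ⟨z, hz, hzu, hzv⟩ := exists_mem_support_isAncestor_of_walk hTree hDFS p.1
    exact ⟨z, List.mem_toFinset.2 (hlca z hzu hzv P hP), hz⟩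
  have hnotMem {x : V} (hwx : IsAncestor T r w x) (hne : w ≠ x) : x ∉ P.support.toFinset :=
    fun hx => hne (hwx.antisymm hTree (.of_mem_support hTree hP (List.mem_toFinset.1 hx)))
  have hcard : P.support.toFinset.card ≤ T.dist r w + 1 :=
    (List.toFinset_card_le _).trans (by rw [length_support, hPlen])
  have := hK.le_card_of_forall_exists_mem (hnotMem hwu hne1) (hnotMem hwv hne2) hmeet
  omega

/-- Let `K` be a `(k+1)`-VC certificate of `H` and `T` a DFS tree of `K`.
If the least common ancestor `w` of `u` and `v` lies within the top `k` layers of `T`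
(depth less than `k`) and `w ≠ u`, `w ≠ v`, then `u` and `v` are not adjacent in `H`. -/
theorem vc_certificate_dfs_no_cross_edge {V : Type*} [Fintype V]
    (H K : SimpleGraph V) (k : ℕ) (hKH : K ≤ H)
    (hcert : ∀ s t : V, ∀ c : ℕ, PairConnected H s t c → PairConnected K s t (min (k + 1) c))
    (T : SimpleGraph V) (r : V) (hT : IsDFSTree K T r)
    (u v w : V)
    (hwu : IsAncestor T r w u) (hwv : IsAncestor T r w v)
    (hlca : ∀ z : V, IsAncestor T r z u → IsAncestor T r z v → IsAncestor T r z w)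
    (hdepth : T.dist r w < k) (hne1 : w ≠ u) (hne2 : w ≠ v) :
    ¬ H.Adj u v :=
  vc_certificate_dfs_no_cross_edge_general H K k hcert T r hT u v w hwu hwv hlca hdepth hne1 hne2
end

section
/- Let G be a finite connected simple undirected graph with n vertices and let s, t be vertices. Let h ≥ 1 and let U be a set of vertices containing s. Suppose there exists an s–t shortest path P such that every subpath of P with h+1 vertices contains a vertex of U. Then dist(s, t) = min over u ∈ U with dist(u, t) ≤ h of (dist(s, u) + dist(u, t)). -/
private lemma dist_getVert_right {V : Type*} (G : SimpleGraph V) :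
    ∀ {u v : V} (p : G.Walk u v) (i : ℕ), G.dist (p.getVert i) v ≤ p.length - i := by
  intro u v p
  induction p with
  | nil => intro i; simp [SimpleGraph.Walk.getVert]
  | cons h q ih =>
    intro i
    cases i with
    | zero =>
      simpa using G.dist_le (SimpleGraph.Walk.cons h q)
    | succ i =>
      simpa [SimpleGraph.Walk.getVert, Nat.succ_sub_succ] using ih i

private lemma dist_getVert_left {V : Type*} (G : SimpleGraph V) (hG : G.Connected) :
    ∀ {u v : V} (p : G.Walk u v) (i : ℕ), G.dist u (p.getVert i) ≤ i := by
  intro u v p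
  induction p with
  | nil => intro i; simp [SimpleGraph.Walk.getVert, SimpleGraph.dist_self]
  | cons h q ih =>
    rename_i a b c
    intro i
    cases i with
    | zero => simp [SimpleGraph.Walk.getVert]
    | succ i =>
      have h1 : G.dist a b <= 1 := by simpa using G.dist_le h.toWalk
      have h2 : G.dist a (q.getVert i) <= G.dist a b + G.dist b (q.getVert i) :=
        hG.dist_triangle
      have h3 := ih i
      have h4 : (SimpleGraph.Walk.cons h q).getVert (i+1) = q.getVert i := rfl
      rw [h4]
      omega

/-- Let `G` be a finite connected simple graph, `s, t` vertices, `h ≥ 1`,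
and `U` a vertex set containing `s`. Suppose there is an `s`-`t` shortest path `P` such
that every subpath of `P` with `h+1` vertices contains a vertex of `U`. Then
`dist(s,t) = min_{u ∈ U, dist(u,t) ≤ h} (dist(s,u) + dist(u,t))`. -/
theorem dist_eq_min_through_hitting_set {V : Type*} [Fintype V]
    (G : SimpleGraph V) (hG : G.Connected) (s t : V) (h : ℕ) (hh : 1 ≤ h)
    (U : Set V) (hsU : s ∈ U)
    (p : G.Walk s t) (hp : p.IsPath) (hlen : p.length = G.dist s t)
    (hcover : ∀ a : ℕ, a + h ≤ p.length → ∃ i : ℕ, a ≤ i ∧ i ≤ a + h ∧ p.getVert i ∈ U) :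
    (∀ u ∈ U, G.dist u t ≤ h → G.dist s t ≤ G.dist s u + G.dist u t) ∧
    (∃ u ∈ U, G.dist u t ≤ h ∧ G.dist s t = G.dist s u + G.dist u t) := by
  constructor
  · intro u _ _
    exact hG.dist_triangle
  · by_cases hL : p.length ≤ h
    · refine ⟨s, hsU, ?_, ?_⟩
      · omega
      · simp
    · push_neg at hL
      obtain ⟨i, hi1, hi2, hiU⟩ := hcover (p.length - h) (by omega)
      refine ⟨p.getVert i, hiU, ?_, ?_⟩
      · have := dist_getVert_right G p i
        omega
      · have h1 : G.dist s t ≤ G.dist s (p.getVert i) + G.dist (p.getVert i) t :=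
          hG.dist_triangle
        have h2 := dist_getVert_left G hG p i
        have h3 := dist_getVert_right G p i
        omega
end
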